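/- arXiv:1202.2928 — 3 statements merged into one kernel-verified Lean document; each statement's English description precedes it below -/
import Mathlib

section
/- Let $T$ be an activation sequence for the technology diffusion process (graph $G$, thresholds $\theta$, seedset $\mathrm{OPT}$), and define a connector as a node whose activation merges two or more disjoint connected components of the previously active nodes into one. Then the number of connectors in $T$ is at most $|\mathrm{OPT}|$. -/
/-!
Let `Φ t` be the number of connected components of the subgraph induced by the first `t`
activated nodes. Activating a node raises `Φ` by at most one, and does not raise it at all
when the node is not a seed: its threshold is at least `2`, so its component in the active
subgraph contains an earlier active node. A connector lowers `Φ` by at least one. Summing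
these steps along the activation sequence, starting from `Φ 0 = 0`, bounds the number of
connectors by the number of seeds.
-/
/-- The number of vertices of the connected component containing `v` in the
subgraph of `G` induced by `insert v A`. -/
noncomputable def compCard {V : Type*} (G : SimpleGraph V) (A : Set V) (v : V) : ℕ :=
  Nat.card {u : (insert v A : Set V) //
    (G.induce (insert v A)).Reachable ⟨v, Set.mem_insert v A⟩ u}

/-- `T` is an activation sequence for seedset `S`. -/
def ValidSeq {V : Type*} [Fintype V] (G : SimpleGraph V) (θ : V → ℕ) (S : Set V)
    (T : V ≃ Fin (Fintype.card V)) : Prop :=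
  ∀ u, u ∉ S → θ u ≤ compCard G {v | T v < T u} u

/-- The number of connected components of the subgraph of `G` induced by `A`. -/
noncomputable def nComp {V : Type*} (G : SimpleGraph V) (A : Set V) : ℕ :=
  Nat.card (G.induce A).ConnectedComponent

/-- A node `u` is a connector for the activation sequence `T` if its
activation merges two or more disjoint connected components of the
previously active nodes into one, i.e. the number of connected components
decreases when `u` activates. -/
def IsConnector {V : Type*} [Fintype V] (G : SimpleGraph V)
    (T : V ≃ Fin (Fintype.card V)) (u : V) : Prop :=
  nComp G {v | T v ≤ T u} < nComp G {v | T v < T u}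

section

open Finset SimpleGraph

theorem card_filter_add_le_of_potential {α : Type*} [Fintype α] {n : ℕ} (e : α ≃ Fin n)
    (Φ : ℕ → ℕ) (P Q : α → Prop) [DecidablePred P] [DecidablePred Q]
    (hstep : ∀ x, Φ (e x + 1) + (if P x then 1 else 0) ≤ Φ (e x) + (if Q x then 1 else 0)) :
    Φ n + #{x | P x} ≤ Φ 0 + #{x | Q x} := by
  have hsum := sum_le_sum fun x (_ : x ∈ univ) => hstep x
  simp only [sum_add_distrib, ← card_filter] at hsum
  have hreindex : ∀ f : ℕ → ℕ, ∑ x, f (e x) = ∑ t ∈ range n, f t := fun f => by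
    rw [e.sum_comp (fun i => f i), Fin.sum_univ_eq_sum_range]
  rw [hreindex (fun t => Φ (t + 1)), hreindex Φ] at hsum
  have htel := sum_range_succ_comm Φ n
  rw [sum_range_succ'] at htel
  omega

variable {V : Type*} (G : SimpleGraph V)

theorem nComp_empty : nComp G ∅ = 0 := by
  rw [nComp, Nat.card_eq_zero]
  exact Or.inl ⟨fun c => c.exists_rep.choose.2⟩

theorem nComp_insert_le [Finite V] (A : Set V) (u : V) :
    nComp G (insert u A) ≤ nComp G A + 1 := by
  let f : (G.induce A).ConnectedComponent ⊕ Unit → (G.induce (insert u A)).ConnectedComponent :=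
    Sum.elim (ConnectedComponent.map (G.induceHomOfLE (Set.subset_insert u A)).toHom)
      fun _ => (G.induce (insert u A)).connectedComponentMk ⟨u, Set.mem_insert u A⟩
  have hf : Function.Surjective f := by
    intro c
    obtain ⟨⟨x, hx | hx⟩, rfl⟩ := c.exists_rep
    · subst hx; exact ⟨Sum.inr (), rfl⟩
    · exact ⟨Sum.inl ((G.induce A).connectedComponentMk ⟨x, hx⟩), rfl⟩
  simpa [nComp, Nat.card_sum] using Nat.card_le_card_of_surjective f hf

theorem nComp_insert_le_of_one_lt_compCard [Finite V] {A : Set V} {u : V}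
    (h : 1 < compCard G A u) : nComp G (insert u A) ≤ nComp G A := by
  let ι := G.induceHomOfLE (Set.subset_insert u A)
  let u' : (insert u A : Set V) := ⟨u, Set.mem_insert u A⟩
  have : Nontrivial {w // (G.induce (insert u A)).Reachable u' w} :=
    Finite.one_lt_card_iff_nontrivial.mp h
  obtain ⟨⟨⟨x, hx⟩, hux⟩, hne⟩ := exists_ne
    (⟨u', .refl _⟩ : {w // (G.induce (insert u A)).Reachable u' w})
  have hxA : x ∈ A := hx.resolve_left fun hxu => hne (by subst hxu; rfl)
  have hsurj : Function.Surjective (ConnectedComponent.map ι.toHom) := by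
    intro c
    obtain ⟨⟨y, hy | hy⟩, rfl⟩ := c.exists_rep
    · subst hy
      exact ⟨(G.induce A).connectedComponentMk ⟨x, hxA⟩, ConnectedComponent.sound hux.symm⟩
    · exact ⟨(G.induce A).connectedComponentMk ⟨y, hy⟩, rfl⟩
  exact Nat.card_le_card_of_surjective _ hsurj

theorem insert_setOf_lt_eq_setOf_le {ι : Type*} [LinearOrder ι] (T : V → ι) (hT : T.Injective)
    (u : V) : insert u {v | T v < T u} = {v | T v ≤ T u} := by
  ext v
  simp only [Set.mem_insert_iff, Set.mem_ofPred_eq, le_iff_lt_or_eq, hT.eq_iff]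
  tauto

theorem nComp_add_ite_connector_le [Fintype V] {θ : V → ℕ} {S : Set V}
    {T : V ≃ Fin (Fintype.card V)} (hT : ValidSeq G θ S T) {u : V} (hθ : 2 ≤ θ u)
    [Decidable (IsConnector G T u)] [Decidable (u ∈ S)] :
    nComp G {v | T v ≤ T u} + (if IsConnector G T u then 1 else 0) ≤
      nComp G {v | T v < T u} + (if u ∈ S then 1 else 0) := by
  have hins := insert_setOf_lt_eq_setOf_le T T.injective u
  rw [← hins]
  split_ifs with hconn hseed hseed
  · rw [IsConnector, ← hins] at hconn; omega
  · rw [IsConnector, ← hins] at hconn; omega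
  · simpa using nComp_insert_le G _ u
  · have hθu : 1 < θ u := by omega
    simpa using nComp_insert_le_of_one_lt_compCard G (hθu.trans_le (hT u hseed))

end

theorem connectors_le_card_seedset_general {V : Type*} [Fintype V]
    (G : SimpleGraph V) (θ : V → ℕ)
    (hθ : ∀ v, 2 ≤ θ v ∧ θ v ≤ Fintype.card V)
    (OPT : Finset V) (T : V ≃ Fin (Fintype.card V)) (hT : ValidSeq G θ ↑OPT T) :
    {u | IsConnector G T u}.ncard ≤ OPT.card := by
  classical
  let Φ : ℕ → ℕ := fun t => nComp G {v | (T v : ℕ) < t}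
  have hstep : ∀ u, Φ (T u + 1) + (if IsConnector G T u then 1 else 0) ≤
      Φ (T u) + (if u ∈ OPT then 1 else 0) := by
    intro u
    have hle : {v | (T v : ℕ) < T u + 1} = {v | T v ≤ T u} := by
      ext v; simp only [Set.mem_ofPred_eq, Fin.le_def]; omega
    simpa only [Φ, hle, Fin.lt_def, Finset.mem_coe] using nComp_add_ite_connector_le G hT (hθ u).1
  have hΦ0 : Φ 0 = 0 := by simpa [Φ] using nComp_empty G
  have := card_filter_add_le_of_potential T Φ (IsConnector G T) (· ∈ OPT) hstep
  rw [← Finset.coe_filter_univ, Set.ncard_coe_finset]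
  simp only [hΦ0, zero_add, Finset.filter_mem_eq_inter, Finset.univ_inter] at this
  exact (Nat.le_add_left _ _).trans this

/-- The number of connectors in an activation sequence induced by a seedset
`OPT` is at most `|OPT|`. -/
theorem connectors_le_card_seedset {V : Type*} [Fintype V] [DecidableEq V]
    (G : SimpleGraph V) (θ : V → ℕ)
    (hθ : ∀ v, 2 ≤ θ v ∧ θ v ≤ Fintype.card V)
    (OPT : Finset V) (T : V ≃ Fin (Fintype.card V)) (hT : ValidSeq G θ ↑OPT T) :
    {u | IsConnector G T u}.ncard ≤ OPT.card :=
  connectors_le_card_seedset_general G θ hθ OPT T hT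
end

section
/- For any integer $r \geq 1$, consider the path graph $G_r$ on vertices $v_1, \dots, v_{2r+1}$ with edges $\{v_i, v_{i+1}\}$, and threshold function $\theta(v_1) = \theta(v_{2r+1}) = 2$, $\theta(v_{r+1}) = 2r+1$, $\theta(v_i) = i$ for $1 < i \leq r$, and $\theta(v_i) = 2r + 2 - i$ for $r+2 \leq i < 2r+1$. Then: (a) the seedset $\{v_1, v_{2r+1}\}$ is feasible for the technology diffusion process; and (b) every feasible seedset that induces a connected subgraph of $G_r$ has size $\Omega(r)$ (specifically, at least $r/2 - 1$). -/
/-- A set of nodes `A` is closed under the activation rule. -/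
def Closed {V : Type*} (G : SimpleGraph V) (θ : V → ℕ) (A : Set V) : Prop :=
  ∀ v, θ v ≤ compCard G A v → v ∈ A

/-- The set of nodes eventually activated by the seedset `S`. -/
def activeSet {V : Type*} (G : SimpleGraph V) (θ : V → ℕ) (S : Set V) : Set V :=
  ⋂₀ {A : Set V | S ⊆ A ∧ Closed G θ A}

/-- A seedset is feasible when it eventually activates every node. -/
def Feasible {V : Type*} (G : SimpleGraph V) (θ : V → ℕ) (S : Set V) : Prop :=
  activeSet G θ S = Set.univ

/-- The threshold function on the path graph `G_r` with `2r+1` vertices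
`v_1, …, v_{2r+1}` (vertex `v_{i+1}` is index `i`). -/
def pathTheta (r : ℕ) (i : Fin (2 * r + 1)) : ℕ :=
  if (i : ℕ) = 0 ∨ (i : ℕ) = 2 * r then 2
  else if (i : ℕ) = r then 2 * r + 1
  else if (i : ℕ) < r then (i : ℕ) + 1
  else 2 * r + 1 - (i : ℕ)

/-!
(a) Away from the ends and the middle, the threshold of `v_i` is one more than the distance
from `v_i` to the nearer end of the path, so from the two seeds activation sweeps inwards one
vertex at a time on both sides; the middle vertex finally sees the whole path.

(b) A connected seedset on a path is an interval `[a, b]` of some length `L`, and such an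
interval is closed under activation as soon as its outer neighbours have thresholds above
`L + 1`. The two halves `i < r` and `i > r` are closed (the middle threshold is `2r + 1`), so a
feasible interval contains the middle vertex; and it is not closed itself, so one of its outer
neighbours, at distance `d` from the end of the path, has threshold `d + 1 ≤ L + 1` (or touches
an end). Since the interval stretches from that neighbour to the middle, `r ≤ d + L ≤ 2L`.
-/

open SimpleGraph

lemma Fin.ncard_Icc {n : ℕ} (a b : Fin n) : (Set.Icc a b).ncard = b + 1 - a := by
  rw [← Finset.coe_Icc, Set.ncard_coe_finset, Fin.card_Icc]

lemma feasible_iff {V : Type*} {G : SimpleGraph V} {θ : V → ℕ} {S : Set V} :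
    Feasible G θ S ↔ ∀ A, S ⊆ A → Closed G θ A → A = Set.univ := by
  simp [Feasible, activeSet, Set.sInter_eq_univ, and_imp]

lemma compCard_le_ncard_insert {V : Type*} [Finite V] (G : SimpleGraph V) (A : Set V) (v : V) :
    compCard G A v ≤ (insert v A).ncard :=
  Nat.card_le_card_of_injective Subtype.val Subtype.val_injective

lemma compCard_le_one {V : Type*} {G : SimpleGraph V} {A : Set V} {v : V}
    (h : ∀ u ∈ A, ¬ G.Adj v u) : compCard G A v ≤ 1 := by
  have hv : ∀ u, (G.induce (insert v A)).Reachable ⟨v, Set.mem_insert v A⟩ u → (u : V) = v := by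
    rintro u ⟨_ | ⟨hadj, -⟩⟩
    · rfl
    · rename_i w
      have hadj : G.Adj v w := hadj
      rcases w.2 with hw | hw
      · rw [hw] at hadj
        exact absurd hadj (G.loopless.irrefl v)
      · exact absurd hadj (h _ hw)
  have : Subsingleton {u // (G.induce (insert v A)).Reachable ⟨v, Set.mem_insert v A⟩ u} :=
    ⟨fun a b => Subtype.ext (Subtype.ext ((hv _ a.2).trans (hv _ b.2).symm))⟩
  exact Finite.card_le_one_iff_subsingleton.2 this

namespace SimpleGraph

variable {n : ℕ}

lemma reachable_induce_pathGraph_of_Icc_subset {B : Set (Fin n)} {x y u w : Fin n}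
    (hB : Set.Icc x y ⊆ B) (hu : u ∈ Set.Icc x y) (hw : w ∈ Set.Icc x y) :
    ((pathGraph n).induce B).Reachable ⟨u, hB hu⟩ ⟨w, hB hw⟩ := by
  obtain ⟨hxu, huy⟩ := hu
  obtain ⟨hxw, hwy⟩ := hw
  rw [Fin.le_def] at hxu huy hxw hwy
  let f : pathGraph ((y : ℕ) - x + 1) →g (pathGraph n).induce B :=
    { toFun := fun i => ⟨⟨x + i, by omega⟩,
        hB ⟨Fin.le_def.2 (Nat.le_add_right _ _), Fin.le_def.2 (show (x : ℕ) + i ≤ y by omega)⟩⟩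
      map_rel' := fun {i j} h => by
        rw [pathGraph_adj] at h
        show (pathGraph n).Adj _ _
        rw [pathGraph_adj]
        simp only [Function.Embedding.subtype_apply]
        omega }
  have hf : ∀ (v : Fin n) (hv : v ∈ B) (h₁ : (x : ℕ) ≤ v) (h₂ : (v : ℕ) ≤ y),
      f ⟨v - x, by omega⟩ = ⟨v, hv⟩ := fun v hv h₁ h₂ => by
    apply Subtype.ext; apply Fin.ext; show (x : ℕ) + (v - x) = v; omega
  rw [← hf u _ hxu huy, ← hf w _ hxw hwy]
  exact ((pathGraph_connected _).preconnected _ _).map f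

lemma mem_of_walk_induce_pathGraph {S : Set (Fin n)} {u w : S}
    (p : ((pathGraph n).induce S).Walk u w) {m : Fin n} (hum : (u : Fin n) ≤ m)
    (hmw : m ≤ (w : Fin n)) : m ∈ S := by
  by_contra hm
  have hlt : (u : Fin n) < m := lt_of_le_of_ne hum (by rintro rfl; exact hm u.2)
  obtain ⟨d, -, hd₁, hd₂⟩ := p.exists_boundary_dart {v | (v : Fin n) < m} hlt (not_lt.2 hmw)
  have hadj : (pathGraph n).Adj d.fst d.snd := d.adj
  rw [pathGraph_adj] at hadj
  simp only [Set.mem_ofPred_eq, not_lt, Fin.lt_def] at hd₁ hd₂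
  have : (d.snd : Fin n) = m := Fin.ext (by omega)
  exact hm (this ▸ d.snd.2)

lemma eq_Icc_of_connected_induce_pathGraph {S : Set (Fin n)}
    (hS : ((pathGraph n).induce S).Connected) : ∃ a b, S = Set.Icc a b := by
  have hne : S.Nonempty := Set.nonempty_coe_sort.1 hS.nonempty
  obtain ⟨a, haS, ha⟩ := Set.exists_min_image S id S.toFinite hne
  obtain ⟨b, hbS, hb⟩ := Set.exists_max_image S id S.toFinite hne
  refine ⟨a, b, Set.Subset.antisymm (fun u hu => ⟨ha u hu, hb u hu⟩) fun m hm => ?_⟩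
  obtain ⟨p⟩ := hS.preconnected ⟨a, haS⟩ ⟨b, hbS⟩
  exact mem_of_walk_induce_pathGraph p hm.1 hm.2

end SimpleGraph

section PathGraph

variable {n : ℕ}

lemma le_compCard_pathGraph {A : Set (Fin n)} {x y v : Fin n} (hxv : x ≤ v) (hvy : v ≤ y)
    (hA : Set.Icc x y ⊆ insert v A) : (y : ℕ) + 1 - x ≤ compCard (pathGraph n) A v := by
  have hv : v ∈ Set.Icc x y := ⟨hxv, hvy⟩
  rw [← Fin.ncard_Icc, ← Nat.card_coe_set_eq]
  exact Nat.card_le_card_of_injective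
    (fun m => ⟨⟨m, hA m.2⟩, reachable_induce_pathGraph_of_Icc_subset hA hv m.2⟩)
    fun m m' h => Subtype.ext (congrArg (fun z => z.1.1) h)

variable {θ : Fin n → ℕ} {A : Set (Fin n)}

lemma Closed.mem_of_Icc_diff_subset (hA : Closed (pathGraph n) θ A) {x y v : Fin n}
    (hxv : x ≤ v) (hvy : v ≤ y) (hsub : Set.Icc x y \ {v} ⊆ A) (hθ : θ v ≤ y + 1 - x) :
    v ∈ A :=
  hA v (hθ.trans (le_compCard_pathGraph hxv hvy (Set.sdiff_singleton_subset_iff.1 hsub)))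

lemma closed_pathGraph_Icc {a b : Fin n} (hθ : ∀ v, 2 ≤ θ v)
    (hleft : ∀ v : Fin n, (v : ℕ) + 1 = a → (b : ℕ) + 2 - a < θ v)
    (hright : ∀ v : Fin n, (v : ℕ) = b + 1 → (b : ℕ) + 2 - a < θ v) :
    Closed (pathGraph n) θ (Set.Icc a b) := by
  intro v hv
  by_contra hvI
  by_cases hadj : ∃ u ∈ Set.Icc a b, (pathGraph n).Adj v u
  · obtain ⟨u, ⟨hau, hub⟩, huv⟩ := hadj
    have hcard : compCard (pathGraph n) (Set.Icc a b) v ≤ b + 1 - a + 1 :=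
      calc compCard (pathGraph n) (Set.Icc a b) v ≤ (insert v (Set.Icc a b)).ncard :=
            compCard_le_ncard_insert _ _ _
        _ ≤ (Set.Icc a b).ncard + 1 := Set.ncard_insert_le _ _
        _ = b + 1 - a + 1 := by rw [Fin.ncard_Icc]
    rw [Set.mem_Icc, not_and_or, not_le, not_le] at hvI
    rw [pathGraph_adj] at huv
    rw [Fin.le_def] at hau hub
    rcases hvI with hva | hbv
    · have := hleft v (by rw [Fin.lt_def] at hva; omega)
      omega
    · have := hright v (by rw [Fin.lt_def] at hbv; omega)
      omega
  · push Not at hadj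
    have := compCard_le_one hadj
    have := hθ v
    omega

lemma Feasible.eq_zero_and_eq_last_of_closed_Icc {θ : Fin (n + 1) → ℕ} {S : Set (Fin (n + 1))}
    (hF : Feasible (pathGraph (n + 1)) θ S) {x y : Fin (n + 1)} (hS : S ⊆ Set.Icc x y)
    (hC : Closed (pathGraph (n + 1)) θ (Set.Icc x y)) : x = 0 ∧ y = Fin.last n := by
  have huniv := feasible_iff.1 hF _ hS hC
  have h0 : (0 : Fin (n + 1)) ∈ Set.Icc x y := huniv ▸ Set.mem_univ _
  have hlast : Fin.last n ∈ Set.Icc x y := huniv ▸ Set.mem_univ _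
  exact ⟨le_antisymm h0.1 (Fin.zero_le x), le_antisymm (Fin.le_last y) hlast.2⟩

end PathGraph

section PathTheta

variable {r : ℕ}

lemma two_le_pathTheta (hr : 1 ≤ r) (i : Fin (2 * r + 1)) : 2 ≤ pathTheta r i := by
  have := i.isLt
  unfold pathTheta
  split_ifs <;> omega

lemma Closed.eq_univ_of_pathTheta (hr : 1 ≤ r) {A : Set (Fin (2 * r + 1))}
    (hA : Closed (pathGraph (2 * r + 1)) (pathTheta r) A) (h0 : 0 ∈ A)
    (hlast : Fin.last (2 * r) ∈ A) : A = Set.univ := by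
  have off_mid : ∀ v : Fin (2 * r + 1), (v : ℕ) ≠ r → v ∈ A := by
    intro v
    induction hk : min (v : ℕ) (2 * r - v) using Nat.strong_induction_on generalizing v with
    | _ k ih =>
    intro hvr
    have hv := v.isLt
    have ih' : ∀ m : Fin (2 * r + 1), min (m : ℕ) (2 * r - m) < k → (m : ℕ) ≠ r → m ∈ A :=
      fun m hm => ih _ hm m rfl
    rcases Nat.lt_or_gt_of_ne hvr with hvr | hvr
    · rcases Nat.eq_zero_or_pos v with hv0 | hv0
      · rwa [show v = 0 from Fin.ext hv0]
      refine hA.mem_of_Icc_diff_subset (Fin.zero_le v) le_rfl ?_ ?_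
      · rintro m ⟨⟨-, hmv⟩, hm⟩
        have hmv : (m : ℕ) < v := lt_of_le_of_ne hmv (Fin.val_ne_of_ne hm)
        exact ih' m (by omega) (by omega)
      · simp only [pathTheta, Fin.val_zero]
        split_ifs <;> omega
    · rcases eq_or_lt_of_le (Nat.le_of_lt_succ hv) with hv2 | hv2
      · rwa [show v = Fin.last (2 * r) from Fin.ext hv2]
      refine hA.mem_of_Icc_diff_subset le_rfl (Fin.le_last v) ?_ ?_
      · rintro m ⟨⟨hvm, -⟩, hm⟩
        have hvm : (v : ℕ) < m := lt_of_le_of_ne hvm (Fin.val_ne_of_ne (Ne.symm hm))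
        have := m.isLt
        exact ih' m (by omega) (by omega)
      · simp only [pathTheta, Fin.val_last]
        split_ifs <;> omega
  refine Set.eq_univ_of_forall fun v => ?_
  by_cases hvr : (v : ℕ) = r
  · refine hA.mem_of_Icc_diff_subset (Fin.zero_le v) (Fin.le_last v) ?_ ?_
    · rintro m ⟨-, hm⟩
      exact off_mid m fun h => hm (Fin.ext (h.trans hvr.symm))
    · simp only [pathTheta, Fin.val_zero, Fin.val_last]
      split_ifs <;> omega
  · exact off_mid v hvr

lemma half_sub_one_le_of_feasible_Icc (hr : 1 ≤ r) {a b : Fin (2 * r + 1)}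
    (hF : Feasible (pathGraph (2 * r + 1)) (pathTheta r) (Set.Icc a b)) :
    r / 2 - 1 ≤ (b : ℕ) + 1 - a := by
  have hθ := two_le_pathTheta hr
  have ha := a.isLt
  have hb := b.isLt
  have hends : ∀ x y : Fin (2 * r + 1), Set.Icc a b ⊆ Set.Icc x y →
      Closed (pathGraph (2 * r + 1)) (pathTheta r) (Set.Icc x y) → (x : ℕ) = 0 ∧ (y : ℕ) = 2 * r :=
    fun x y hsub hC => by
      obtain ⟨rfl, rfl⟩ := hF.eq_zero_and_eq_last_of_closed_Icc hsub hC
      exact ⟨rfl, rfl⟩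
  have hrb : r ≤ b := by
    by_contra! hbr
    have := hends 0 ⟨r - 1, by omega⟩
      (Set.Icc_subset_Icc (Fin.zero_le a) (Fin.le_def.2 (Nat.le_sub_one_of_lt hbr)))
      (closed_pathGraph_Icc hθ (fun v hv => by simp at hv)
        fun v hv => by simp only [pathTheta] at hv ⊢; split_ifs <;> omega)
    simp only [Fin.val_zero] at this
    omega
  have har : a ≤ r := by
    by_contra! hra
    have := hends ⟨r + 1, by omega⟩ (Fin.last _)
      (Set.Icc_subset_Icc (Fin.le_def.2 hra) (Fin.le_last b))
      (closed_pathGraph_Icc hθ (fun v hv => by simp only [pathTheta] at hv ⊢; split_ifs <;> omega)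
        fun v hv => by have := v.isLt; simp only [Fin.val_last] at hv; omega)
    simp only [Fin.val_last] at this
    omega
  -- a short interval around the middle, far from both ends, would be closed
  by_contra! hshort
  have := hends a b le_rfl
    (closed_pathGraph_Icc hθ (fun v hv => by simp only [pathTheta]; split_ifs <;> omega)
      fun v hv => by simp only [pathTheta]; split_ifs <;> omega)
  omega

end PathTheta

/-- On the path `G_r`: (a) the seedset `{v_1, v_{2r+1}}` is feasible, and
(b) every feasible seedset inducing a connected subgraph has size `Ω(r)`
(at least `r/2 - 1`). -/
theorem path_connected_seedset_gap (r : ℕ) (hr : 1 ≤ r) :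
    Feasible (SimpleGraph.pathGraph (2 * r + 1)) (pathTheta r)
      {i : Fin (2 * r + 1) | (i : ℕ) = 0 ∨ (i : ℕ) = 2 * r} ∧
    ∀ S : Set (Fin (2 * r + 1)),
      Feasible (SimpleGraph.pathGraph (2 * r + 1)) (pathTheta r) S →
      ((SimpleGraph.pathGraph (2 * r + 1)).induce S).Connected →
      r / 2 - 1 ≤ S.ncard := by
  refine ⟨feasible_iff.2 fun A hSA hA => hA.eq_univ_of_pathTheta hr ?_ ?_, fun S hF hS => ?_⟩
  · exact hSA (Or.inl rfl)
  · exact hSA (Or.inr rfl)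
  · obtain ⟨a, b, rfl⟩ := eq_Icc_of_connected_induce_pathGraph hS
    rw [Fin.ncard_Icc]
    exact half_sub_one_le_of_feasible_Icc hr hF
end

section
/- Let $n \geq 3$. Consider the graph $G$ on vertices $\{v_1, \dots, v_{2n+1}\}$ where $\{v_1,\dots,v_n\}$ and $\{v_{n+1},\dots,v_{2n}\}$ each form cliques, and $v_{2n+1}$ is adjacent to all other vertices. Let $\theta(v_i) = n+2$ for $i \leq 2n$ and $\theta(v_{2n+1}) = 2n+1$. Let $f(S)$ denote the number of nodes eventually activated by seedset $S$ in the technology diffusion process. Then for $S_1 = \{v_1,\dots,v_n\}$ and $S_2 = \{v_{2n+1}\}$: $f(S_1) = n$, $f(S_2) = 1$, and $f(S_1 \cup S_2) = 2n+1$; hence $f(S_1) + f(S_2) < f(S_1 \cup S_2)$ and $f$ is not submodular. -/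
/-- Two `n`-cliques `{v_1,…,v_n}` and `{v_{n+1},…,v_{2n}}`, with the hub
`v_{2n+1}` adjacent to all other vertices (vertex `v_{i+1}` is index `i`). -/
def G11 (n : ℕ) : SimpleGraph (Fin (2 * n + 1)) :=
  SimpleGraph.fromRel (fun i j =>
    ((i : ℕ) < n ∧ (j : ℕ) < n) ∨
    (n ≤ (i : ℕ) ∧ (i : ℕ) < 2 * n ∧ n ≤ (j : ℕ) ∧ (j : ℕ) < 2 * n) ∨
    (i : ℕ) = 2 * n)

def theta11 (n : ℕ) (i : Fin (2 * n + 1)) : ℕ :=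
  if (i : ℕ) = 2 * n then 2 * n + 1 else n + 2

/-- The influence function: the number of nodes eventually activated. -/
noncomputable def f11 (n : ℕ) (S : Set (Fin (2 * n + 1))) : ℕ :=
  (activeSet (G11 n) (theta11 n) S).ncard

section Diffusion

variable {V : Type*} (G : SimpleGraph V) (θ : V → ℕ)

theorem activeSet_eq_of_closed {S : Set V} (h : Closed G θ S) : activeSet G θ S = S :=
  subset_antisymm (Set.sInter_subset_of_mem ⟨subset_rfl, h⟩) fun _ hv _ hA => hA.1 hv

theorem compCard_le_ncard [Finite V] (A : Set V) (v : V) :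
    compCard G A v ≤ (insert v A).ncard := by
  rw [← Nat.card_coe_set_eq]
  exact Nat.card_le_card_of_injective Subtype.val Subtype.val_injective

theorem closed_of_ncard_insert_lt [Finite V] {A : Set V}
    (h : ∀ v ∉ A, (insert v A).ncard < θ v) : Closed G θ A := fun v hv => by
  by_contra hvA
  exact (h v hvA).not_ge (hv.trans (compCard_le_ncard G A v))

theorem compCard_eq_ncard_of_forall_adj {A : Set V} {v c : V} (hc : c ∈ insert v A)
    (hadj : ∀ w ≠ c, G.Adj c w) : compCard G A v = (insert v A).ncard := by
  have hreach : ∀ u, (G.induce (insert v A)).Reachable ⟨v, Set.mem_insert v A⟩ u := by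
    have toCenter : ∀ u : (insert v A : Set V),
        (G.induce (insert v A)).Reachable ⟨c, hc⟩ u := fun u => by
      by_cases hu : u.1 = c
      · exact (Subtype.ext hu : u = ⟨c, hc⟩) ▸ .rfl
      · exact SimpleGraph.Adj.reachable (hadj u.1 hu)
    exact fun u => (toCenter _).symm.trans (toCenter u)
  rw [compCard, Nat.card_congr (Equiv.subtypeUnivEquiv hreach), Nat.card_coe_set_eq]

end Diffusion

namespace G11

theorem last_adj {n : ℕ} {w : Fin (2 * n + 1)} (hw : w ≠ Fin.last (2 * n)) :
    (G11 n).Adj (Fin.last (2 * n)) w := by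
  rw [G11, SimpleGraph.fromRel_adj]
  exact ⟨hw.symm, Or.inl (Or.inr (Or.inr rfl))⟩

end G11

theorem le_theta11 {n : ℕ} (hn : 1 ≤ n) (v : Fin (2 * n + 1)) : n + 2 ≤ theta11 n v := by
  unfold theta11; split_ifs <;> omega

theorem theta11_of_ne_last {n : ℕ} {v : Fin (2 * n + 1)} (hv : v ≠ Fin.last (2 * n)) :
    theta11 n v = n + 2 :=
  if_neg fun h => hv (Fin.ext h)

theorem setOf_val_eq_last (n : ℕ) :
    {i : Fin (2 * n + 1) | (i : ℕ) = 2 * n} = {Fin.last (2 * n)} := by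
  ext i; simp [Fin.ext_iff]

theorem ncard_setOf_val_lt (n : ℕ) : {i : Fin (2 * n + 1) | (i : ℕ) < n}.ncard = n := by
  have : {i : Fin (2 * n + 1) | (i : ℕ) < n} = Set.range (Fin.castLE (n := n) (by omega)) := by
    ext i; simp
  rw [this, Set.ncard_range_of_injective (Fin.castLE_injective _), Nat.card_eq_fintype_card,
    Fintype.card_fin]

theorem last_notMem_setOf_val_lt (n : ℕ) :
    Fin.last (2 * n) ∉ {i : Fin (2 * n + 1) | (i : ℕ) < n} := by
  simp only [Set.mem_ofPred_eq, Fin.val_last]; omega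

theorem f11_setOf_val_lt {n : ℕ} (hn : 1 ≤ n) : f11 n {i | (i : ℕ) < n} = n := by
  have hclosed : Closed (G11 n) (theta11 n) {i | (i : ℕ) < n} :=
    closed_of_ncard_insert_lt _ _ fun v hv => by
      rw [Set.ncard_insert_of_notMem hv, ncard_setOf_val_lt]
      exact (Nat.lt_succ_self _).trans_le (le_theta11 hn v)
  rw [f11, activeSet_eq_of_closed _ _ hclosed, ncard_setOf_val_lt]

theorem f11_setOf_val_eq {n : ℕ} (hn : 1 ≤ n) : f11 n {i | (i : ℕ) = 2 * n} = 1 := by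
  rw [setOf_val_eq_last]
  have hclosed : Closed (G11 n) (theta11 n) {Fin.last (2 * n)} :=
    closed_of_ncard_insert_lt _ _ fun v hv => by
      rw [Set.ncard_pair hv]
      have := le_theta11 hn v
      omega
  rw [f11, activeSet_eq_of_closed _ _ hclosed, Set.ncard_singleton]

theorem f11_setOf_val_lt_union_setOf_val_eq (n : ℕ) :
    f11 n ({i | (i : ℕ) < n} ∪ {i | (i : ℕ) = 2 * n}) = 2 * n + 1 := by
  suffices activeSet (G11 n) (theta11 n) ({i | (i : ℕ) < n} ∪ {i | (i : ℕ) = 2 * n}) =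
      Set.univ by
    rw [f11, this, Set.ncard_univ, Nat.card_eq_fintype_card, Fintype.card_fin]
  refine Set.eq_univ_of_forall fun x A ⟨hSA, hclosed⟩ => ?_
  rw [setOf_val_eq_last, Set.union_singleton] at hSA
  have hlast : Fin.last (2 * n) ∈ A := hSA (Set.mem_insert _ _)
  by_contra hxA
  have hx : x ≠ Fin.last (2 * n) := fun h => hxA (h ▸ hlast)
  refine hxA (hclosed x ?_)
  have hseeds : n + 1 ≤ A.ncard := by
    have := Set.ncard_le_ncard hSA
    rwa [Set.ncard_insert_of_notMem (last_notMem_setOf_val_lt n), ncard_setOf_val_lt] at this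
  rw [theta11_of_ne_last hx,
    compCard_eq_ncard_of_forall_adj _ (Set.mem_insert_of_mem x hlast) fun _ => G11.last_adj,
    Set.ncard_insert_of_notMem hxA]
  omega

/-- The influence function is not submodular: for `S₁` the first clique and
`S₂` the hub, `f(S₁) + f(S₂) < f(S₁ ∪ S₂)`. -/
theorem not_submodular (n : ℕ) (hn : 3 ≤ n) :
    f11 n {i | (i : ℕ) < n} = n ∧
    f11 n {i | (i : ℕ) = 2 * n} = 1 ∧
    f11 n ({i | (i : ℕ) < n} ∪ {i | (i : ℕ) = 2 * n}) = 2 * n + 1 ∧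
    f11 n {i | (i : ℕ) < n} + f11 n {i | (i : ℕ) = 2 * n}
      < f11 n ({i | (i : ℕ) < n} ∪ {i | (i : ℕ) = 2 * n}) := by
  have h₁ := f11_setOf_val_lt (n := n) (by omega)
  have h₂ := f11_setOf_val_eq (n := n) (by omega)
  have h₁₂ := f11_setOf_val_lt_union_setOf_val_eq n
  refine ⟨h₁, h₂, h₁₂, ?_⟩
  omega
end
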